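/- arXiv:1201.6481 — 9 statements merged into one kernel-verified Lean document; each statement's English description precedes it below -/
import Mathlib

section
/- Let F be a supertropical semifield and let φ : V → V′ be a supertropical map between supertropical vector spaces over F. Then φ(a·v) ⊨_gs a·φ(v) for every v ∈ V and every a ∈ F (including ghost a and a = 0). In particular, φ(H₀) ⊆ H₀′, where H₀ and H₀′ are the ghost submodules of V and V′. -/
/-- A supertropical semifield (with an adjoined zero element), following
Izhakian–Knebusch–Rowen: a commutative semiring `F` together with an idempotent
additive and multiplicative ghost map `ν : F → F` whose fixed points are the
ghost elements (together with `0`), such that `a + b = ν a` when `ν a = ν b`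
and `a + b ∈ {a, b}` otherwise, the tangible elements `T = F ∖ (G ∪ {0})`
form a multiplicative group, and `ν` maps `T` onto the nonzero ghosts. -/
class SupertropicalSemifield (F : Type*) extends CommSemiring F where
  nu : F → F
  nu_zero : nu 0 = 0
  nu_idem : ∀ a, nu (nu a) = nu a
  nu_add : ∀ a b, nu (a + b) = nu a + nu b
  nu_mul : ∀ a b, nu (a * b) = nu a * nu b
  add_eq_nu : ∀ a b, nu a = nu b → a + b = nu a
  add_cases : ∀ a b, nu a ≠ nu b → a + b = a ∨ a + b = b
  tangible_inv : ∀ a, nu a ≠ a → ∃ b, nu b ≠ b ∧ a * b = 1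
  nu_onto : ∀ g, nu g = g → g ≠ 0 → ∃ t, nu t ≠ t ∧ nu t = g

namespace Supertropical

open SupertropicalSemifield

variable (F : Type*) [SupertropicalSemifield F]

/-- `a` is ghost or zero (i.e. `a ∈ G ∪ {0}`, the fixed points of `ν`). -/
def Ghost0 (a : F) : Prop := nu a = a

/-- `a` is tangible: `a ∈ T = F ∖ (G ∪ {0})`. -/
def Tangible (a : F) : Prop := nu a ≠ a

/-- The ghost-surpassing relation on `F`:  `b ⊨_gs a` iff `b = a + c` with `c` ghost or zero. -/
def GS (b a : F) : Prop := ∃ c, Ghost0 F c ∧ b = a + c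

/-- `a ≥_ν b`. -/
def nuGE (a b : F) : Prop := nu a + nu b = nu a

/-- `a >_ν b`. -/
def nuGT (a b : F) : Prop := nuGE F a b ∧ nu a ≠ nu b

/-- `a ≅_ν b` (`ν`-matched). -/
def nuEq (a b : F) : Prop := nu a = nu b

section VS

variable {V : Type*} [AddCommMonoid V] [Module F V]

/-- `v` lies in the ghost submodule `H₀ = eV`, `e = 1 + 1`. -/
def GhostV (v : V) : Prop := ∃ u : V, v = ((1 : F) + 1) • u

/-- The ghost-surpassing relation on a supertropical vector space:
`v ⊨_gs w` iff `v = w + h` with `h ∈ H₀`. -/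
def GSV (v w : V) : Prop := ∃ h : V, GhostV F h ∧ v = w + h

variable {W : Type*} [AddCommMonoid W] [Module F W]

/-- A supertropical map `φ : V → W`: `φ(v + w) ⊨_gs φ(v) + φ(w)` and
`φ(a • v) = a • φ(v)` for tangible `a`. -/
def STMap (φ : V → W) : Prop :=
  (∀ v w : V, GSV F (φ (v + w)) (φ v + φ w)) ∧
    ∀ a : F, Tangible F a → ∀ v : V, φ (a • v) = a • φ v

/-- A family of vectors is tropically independent if no linear combination with
tangible coefficients, not all zero, lies in the ghost submodule. -/
def TropIndep {m : ℕ} (v : Fin m → V) : Prop :=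
  ∀ β : Fin m → F, (∀ i, Tangible F (β i) ∨ β i = 0) → (∃ i, β i ≠ 0) →
    ¬ GhostV F (∑ i, β i • v i)

/-- `S ⊆ V` has rank `r`: it contains `r` tropically independent vectors, and no
tropically independent family in `S` has more than `r` members. -/
def HasRank (S : Set V) (r : ℕ) : Prop :=
  (∃ v : Fin r → V, (∀ i, v i ∈ S) ∧ TropIndep F v) ∧
    ∀ (m : ℕ) (v : Fin m → V), (∀ i, v i ∈ S) → TropIndep F v → m ≤ r

/-- A supertropical bilinear form: a supertropical map in each variable. -/
def IsBilinear (B : V → V → F) : Prop :=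
  (∀ w : V, STMap F (fun v => B v w)) ∧ ∀ v : V, STMap F (fun w => B v w)

/-- `B` is supertropically symmetric: `⟨v,w⟩ + ⟨w,v⟩` is ghost (or zero) for all `v, w`. -/
def SupSymmetric (B : V → V → F) : Prop := ∀ v w : V, Ghost0 F (B v w + B w v)

/-- A strict bilinear form. -/
def IsStrict (B : V → V → F) : Prop :=
  ∀ (a₁ a₂ b₁ b₂ : F) (v₁ v₂ w₁ w₂ : V),
    B (a₁ • v₁ + a₂ • v₂) (b₁ • w₁ + b₂ • w₂) =
      a₁ * b₁ * B v₁ w₁ + a₁ * b₂ * B v₁ w₂ + a₂ * b₁ * B v₂ w₁ + a₂ * b₂ * B v₂ w₂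

/-- `v` and `w` are compatible: `⟨v,v⟩ + ⟨w,w⟩ ≥_ν ⟨v,w⟩ + ⟨w,v⟩`. -/
def Compatible (B : V → V → F) (v w : V) : Prop :=
  nuGE F (B v v + B w w) (B v w + B w v)

/-- `v` and `w` are strictly compatible. -/
def StrictlyCompatible (B : V → V → F) (v w : V) : Prop :=
  Compatible F B v w ∧
    (nuEq F (B v v) (B w w) ∨ nuGT F (B v v + B w w) (B v w + B w v))

/-- The pair `{v, w}` is weakly Cauchy-Schwartz: `⟨v,v⟩⟨w,w⟩ ≥_ν ⟨v,w⟩² + ⟨w,v⟩²`. -/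
def WeakCS (B : V → V → F) (v w : V) : Prop :=
  nuGE F (B v v * B w w) (B v w ^ 2 + B w v ^ 2)

/-- The pair `{v, w}` is Cauchy-Schwartz: `⟨v,v⟩⟨w,w⟩ >_ν ⟨v,w⟩² + ⟨w,v⟩²`. -/
def CS (B : V → V → F) (v w : V) : Prop :=
  nuGT F (B v v * B w w) (B v w ^ 2 + B w v ^ 2)

end VS

/-- The permanent (supertropical determinant) of a square matrix. -/
def perm {n : ℕ} (A : Matrix (Fin n) (Fin n) F) : F :=
  ∑ σ : Equiv.Perm (Fin n), ∏ i, A i (σ i)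

/-- The supertropical adjoint matrix: the transpose of the matrix of cofactors. -/
def adjSup {n : ℕ} (A : Matrix (Fin (n + 1)) (Fin (n + 1)) F) :
    Matrix (Fin (n + 1)) (Fin (n + 1)) F :=
  Matrix.of fun i j => perm F (A.submatrix (Fin.succAbove j) (Fin.succAbove i))

end Supertropical

open Supertropical in
/-- Any supertropical map `φ : V → V'` satisfies
`φ(a • v) ⊨_gs a • φ(v)` for every `v ∈ V` and every `a ∈ F` (including ghost
`a` and `a = 0`); in particular `φ(H₀) ⊆ H₀'`. -/
theorem stmt0 {F : Type*} [SupertropicalSemifield F]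
    {V V' : Type*} [AddCommMonoid V] [Module F V] [AddCommMonoid V'] [Module F V']
    (φ : V → V') (hφ : STMap F φ) :
    (∀ (a : F) (v : V), GSV F (φ (a • v)) (a • φ v)) ∧
      ∀ v : V, GhostV F v → GhostV F (φ v) := by
  have ghost_add : ∀ h₁ h₂ : V', GhostV F h₁ → GhostV F h₂ → GhostV F (h₁ + h₂) := by
    rintro _ _ ⟨u₁, rfl⟩ ⟨u₂, rfl⟩
    exact ⟨u₁ + u₂, (smul_add _ _ _).symm⟩
  have ghost_zero : GhostV F (0 : V') := ⟨0, (smul_zero _).symm⟩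
  have key : ∀ (a : F) (v : V), GSV F (φ (a • v)) (a • φ v) := by
    intro a v
    by_cases ht : Supertropical.Tangible F a
    · exact ⟨0, ghost_zero, by rw [hφ.2 a ht v, add_zero]⟩
    · have hg : SupertropicalSemifield.nu a = a := not_not.mp ht
      by_cases h0 : a = 0
      · subst h0
        rw [zero_smul, zero_smul]
        obtain ⟨h, hh, he⟩ := hφ.1 0 0
        rw [add_zero] at he
        refine ⟨φ (0 : V), ?_, (zero_add _).symm⟩
        have : φ (0 : V) = ((1 : F) + 1) • φ (0 : V) + h := by
          rw [add_smul, one_smul]; exact he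
        rw [this]
        exact ghost_add _ _ ⟨φ 0, rfl⟩ hh
      · obtain ⟨t, htt, hta⟩ := SupertropicalSemifield.nu_onto a hg h0
        have ha : t + t = a := by
          rw [SupertropicalSemifield.add_eq_nu t t rfl, hta]
        obtain ⟨h, hh, he⟩ := hφ.1 (t • v) (t • v)
        refine ⟨h, hh, ?_⟩
        calc φ (a • v) = φ (t • v + t • v) := by rw [← add_smul, ha]
          _ = φ (t • v) + φ (t • v) + h := he
          _ = a • φ v + h := by
              rw [hφ.2 t htt v, ← two_smul F, two_smul F (t • _), ← add_smul, ha]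
  refine ⟨key, ?_⟩
  rintro v ⟨u, rfl⟩
  obtain ⟨h, hh, he⟩ := key ((1 : F) + 1) u
  rw [he]
  exact ghost_add _ _ ⟨φ u, rfl⟩ hh
end

section
/- Let F be a supertropical semifield, V and V′ supertropical vector spaces over F, and φ : V → V′ a function satisfying φ(v+w) ⊨_gs φ(v)+φ(w) for all v,w ∈ V and φ(αv) ⊨_gs αφ(v) for every tangible α ∈ T and every v ∈ V. Then φ(αv) = αφ(v) for every tangible α and every v, i.e. φ is a supertropical map. -/
open Supertropical SupertropicalSemifield in
lemma e_add_e {F : Type*} [SupertropicalSemifield F] :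
    ((1 : F) + 1) + (1 + 1) = (1 + 1) := by
  have h1 : (1 : F) + 1 = nu 1 := add_eq_nu 1 1 rfl
  rw [h1]
  have := add_eq_nu (nu (1:F)) (nu 1) rfl
  rw [this, nu_idem]

open Supertropical SupertropicalSemifield in
lemma gsv_antisymm {F : Type*} [SupertropicalSemifield F]
    {V : Type*} [AddCommMonoid V] [Module F V] {v w : V}
    (h1 : GSV F v w) (h2 : GSV F w v) : v = w := by
  obtain ⟨h, ⟨u, rfl⟩, hv⟩ := h1
  obtain ⟨h', ⟨u', rfl⟩, hw⟩ := h2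
  set e : F := (1 : F) + 1 with he
  have star : v = v + (e • u' + e • u) := by
    conv_lhs => rw [hv, hw]
    rw [add_assoc]
  refine (calc w = v + e • u' := hw
    _ = v + (e • u' + e • u) + e • u' := by conv_lhs => rw [star]
    _ = v + (e • u' + e • u' + e • u) := by abel
    _ = v + (e • u' + e • u) := by rw [← add_smul, e_add_e]
    _ = v := star.symm).symm

open Supertropical in
/-- If `φ : V → V'` satisfies `φ(v + w) ⊨_gs φ(v) + φ(w)` for all
`v, w` and `φ(α • v) ⊨_gs α • φ(v)` for all tangible `α` and all `v`, then in
fact `φ(α • v) = α • φ(v)` for all tangible `α`, i.e. `φ` is a supertropical map. -/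
theorem stmt1 {F : Type*} [SupertropicalSemifield F]
    {V V' : Type*} [AddCommMonoid V] [Module F V] [AddCommMonoid V'] [Module F V']
    (φ : V → V')
    (hadd : ∀ v w : V, GSV F (φ (v + w)) (φ v + φ w))
    (hsmul : ∀ a : F, Tangible F a → ∀ v : V, GSV F (φ (a • v)) (a • φ v)) :
    (∀ a : F, Tangible F a → ∀ v : V, φ (a • v) = a • φ v) ∧ STMap F φ := by
  have key : ∀ a : F, Tangible F a → ∀ v : V, φ (a • v) = a • φ v := by
    intro a ha v
    obtain ⟨b, hb, hab⟩ := SupertropicalSemifield.tangible_inv a ha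
    refine gsv_antisymm (hsmul a ha v) ?_
    have h2 := hsmul b hb (a • v)
    rw [← mul_smul, mul_comm, hab, one_smul] at h2
    obtain ⟨h, ⟨u, rfl⟩, hv⟩ := h2
    refine ⟨a • (((1:F)+1) • u), ⟨a • u, by rw [smul_comm]⟩, ?_⟩
    rw [hv, smul_add, ← mul_smul, hab, one_smul]
  exact ⟨key, hadd, key⟩
end

section
/- Let F be a supertropical semifield and A a nonsingular n×n matrix over F. Set Ā := I_A A. Then Ā A^∇ I_A = I_A and I_A Ā = Ā. -/
/-!
Write `A_{j←i}` for `A` with row `j` replaced by row `i` (the matrix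
`A.submatrix (Function.update id j i) id`). Expanding along row `j` shows that the entries of
`A adj(A)` are the permanents `|A_{j←i}|`, so `I_A² = I_A` amounts to
`∑ₖ |A_{k←i}| |A_{j←k}| = |A| |A_{j←i}|`, whose `k = i` summand is the right-hand side.
A track of `A_{k←i}` times a track of `A_{j←k}` covers the same multiset of cells as a track of
`A` times a track of `A_{j←i}`: the cells form a bipartite multigraph in which each column has
degree two, and Hall's theorem extracts a perfect matching from it. Hence every summand is
`ν`-dominated by `|A| |A_{j←i}|`. For `i ≠ j` the permanent `|A_{j←i}|` has two equal rows and is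
ghost, so it absorbs the other summands. For `i = j` the domination is strict: otherwise `|A|`
would have two distinct dominant tracks and be ghost, or a single dominant track would cover a
cell an odd number of times. Both identities follow from `I_A² = I_A`.
-/

namespace Supertropical

open SupertropicalSemifield Finset

variable {F : Type*} [SupertropicalSemifield F]

lemma add_self_eq_nu (a : F) : a + a = nu a := add_eq_nu a a rfl

lemma nu_add_nu_self (a : F) : nu a + nu a = nu a := by
  rw [← nu_add, add_self_eq_nu, nu_idem]

lemma ghost0_nu (a : F) : Ghost0 F (nu a) := nu_idem a

lemma Ghost0.mul_left (c : F) {g : F} (hg : Ghost0 F g) : Ghost0 F (c * g) := by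
  have h : c * g + c * g = c * g := by rw [← mul_add, add_self_eq_nu, hg]
  rw [Ghost0, ← add_self_eq_nu, h]

lemma nu_add_eq_or (a b : F) : nu (a + b) = nu a ∨ nu (a + b) = nu b := by
  by_cases h : nu a = nu b
  · rw [add_eq_nu a b h, nu_idem]
    exact Or.inl rfl
  · rcases add_cases a b h with h' | h' <;> rw [h'] <;> simp

lemma exists_nu_sum_eq {α : Type*} {s : Finset α} (hs : s.Nonempty) (f : α → F) :
    ∃ x ∈ s, nu (∑ y ∈ s, f y) = nu (f x) := by
  classical
  induction hs using Finset.Nonempty.cons_induction with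
  | singleton a => exact ⟨a, mem_singleton_self a, by rw [sum_singleton]⟩
  | cons a s ha hs ih =>
    obtain ⟨x, hx, hsum⟩ := ih
    rw [sum_cons]
    rcases nu_add_eq_or (f a) (∑ y ∈ s, f y) with h | h
    · exact ⟨a, mem_cons_self a s, h⟩
    · exact ⟨x, mem_cons_of_mem hx, h.trans hsum⟩

lemma Tangible.isUnit {a : F} (ha : Tangible F a) : IsUnit a :=
  let ⟨b, _, hab⟩ := tangible_inv a ha
  IsUnit.of_mul_eq_one b hab

lemma nuGE.trans {a b c : F} (hab : nuGE F a b) (hbc : nuGE F b c) : nuGE F a c := by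
  unfold nuGE at *
  rw [← hab, add_assoc, hbc]

lemma nuGE.antisymm {a b : F} (hab : nuGE F a b) (hba : nuGE F b a) : nu a = nu b :=
  hab.symm.trans ((add_comm _ _).trans hba)

lemma nuGE.add {a b c : F} (hb : nuGE F a b) (hc : nuGE F a c) : nuGE F a (b + c) := by
  unfold nuGE at *
  rw [nu_add, ← add_assoc, hb, hc]

lemma nuGE_add_right (a b : F) : nuGE F (a + b) a := by
  rw [nuGE, nu_add, add_right_comm, nu_add_nu_self]

lemma nuGE_add_left (a b : F) : nuGE F (a + b) b := add_comm b a ▸ nuGE_add_right b a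

lemma nuGE_sum_of_mem {α : Type*} {s : Finset α} (f : α → F) {x : α} (hx : x ∈ s) :
    nuGE F (∑ y ∈ s, f y) (f x) := by
  classical
  rw [← add_sum_erase s f hx]
  exact nuGE_add_right _ _

lemma nuGE_sum {α : Type*} {s : Finset α} {f : α → F} {a : F} (h : ∀ x ∈ s, nuGE F a (f x)) :
    nuGE F a (∑ x ∈ s, f x) :=
  sum_induction f (nuGE F a) (fun _ _ => nuGE.add) (by rw [nuGE, nu_zero, add_zero]) h

lemma nuGE.mul_right {a b : F} (h : nuGE F a b) (c : F) : nuGE F (a * c) (b * c) := by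
  unfold nuGE at *
  rw [nu_mul, nu_mul, ← add_mul, h]

lemma nuGE.mul_left {a b : F} (h : nuGE F a b) (c : F) : nuGE F (c * a) (c * b) := by
  rw [mul_comm c a, mul_comm c b]
  exact h.mul_right c

lemma nuGE.mul {a b x y : F} (hx : nuGE F a x) (hy : nuGE F b y) : nuGE F (a * b) (x * y) :=
  (hy.mul_left a).trans (hx.mul_right y)

lemma add_eq_left_of_nuGT {a b : F} (h : nuGT F a b) : a + b = a := by
  refine (add_cases a b h.2).resolve_right fun hb => h.2 ?_
  rw [← h.1, ← nu_add, hb]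

lemma add_eq_left_of_ghost0 {a b : F} (ha : Ghost0 F a) (h : nuGE F a b) : a + b = a := by
  by_cases hab : nu a = nu b
  · rw [add_eq_nu a b hab, ha]
  · exact add_eq_left_of_nuGT ⟨h, hab⟩

lemma add_sum_eq_left {α : Type*} {s : Finset α} {f : α → F} {a : F}
    (h : ∀ x ∈ s, a + f x = a) : a + ∑ x ∈ s, f x = a :=
  sum_induction f (fun y => a + y = a) (fun x y hx hy => by rw [← add_assoc, hx, hy])
    (add_zero a) h

lemma ghost0_sum_of_nu_eq_of_nu_eq {α : Type*} [DecidableEq α] {s : Finset α} {f : α → F}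
    {x y : α} (hx : x ∈ s) (hy : y ∈ s) (hxy : x ≠ y)
    (hfx : nu (f x) = nu (∑ z ∈ s, f z)) (hfy : nu (f y) = nu (∑ z ∈ s, f z)) :
    Ghost0 F (∑ z ∈ s, f z) := by
  set r := ∑ z ∈ (s.erase x).erase y, f z
  have hsum : ∑ z ∈ s, f z = f x + f y + r := by
    rw [← add_sum_erase s f hx, ← add_sum_erase _ f (mem_erase.2 ⟨hxy.symm, hy⟩), add_assoc]
  have hr : nuGE F (nu (f x)) r := by
    have := nuGE_add_left (f x + f y) r
    rw [← hsum] at this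
    unfold nuGE at *
    rwa [nu_idem, hfx]
  rw [hsum, add_eq_nu _ _ (hfx.trans hfy.symm), add_eq_left_of_ghost0 (ghost0_nu _) hr]
  exact ghost0_nu _

lemma nu_eq_of_nu_mul_eq {a b x y : F} (ha : IsUnit a) (hx : nuGE F a x) (hy : nuGE F b y)
    (h : nu (x * y) = nu (a * b)) : nu y = nu b := by
  have hab : nuGE F (a * y) (a * b) := by
    have := hx.mul_right y
    unfold nuGE at *
    rwa [← h]
  have hay : nu (a * y) = nu (a * b) := nuGE.antisymm hab (hy.mul_left a)
  obtain ⟨u, rfl⟩ := ha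
  calc nu y = nu (↑u⁻¹ * (↑u * y)) := by rw [Units.inv_mul_cancel_left]
    _ = nu (↑u⁻¹ * (↑u * b)) := by rw [nu_mul, hay, ← nu_mul]
    _ = nu b := by rw [Units.inv_mul_cancel_left]

section Cells

variable {α : Type*} [Fintype α]

def cells (u w : α → α) : Multiset (α × α) := univ.val.map fun r => (u r, w r)

lemma cells_comp_equiv (u w : α → α) (e : α ≃ α) : cells (u ∘ e) (w ∘ e) = cells u w := by
  conv_rhs => rw [cells, ← Multiset.map_univ_val_equiv e, Multiset.map_map]
  rfl

lemma count_cells [DecidableEq α] (u : α → α) (w : Equiv.Perm α) (x y : α) :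
    (cells u w).count (x, y) = if u (w.symm y) = x then 1 else 0 := by
  have hinj : Function.Injective fun c : α => (u (w.symm c), c) := fun _ _ h => (Prod.ext_iff.1 h).2
  rw [← cells_comp_equiv u w w.symm]
  simp only [cells, Function.comp_apply, Equiv.apply_symm_apply]
  split_ifs with h
  · subst h
    exact (Multiset.count_map_eq_count' _ _ hinj y).trans (Multiset.count_univ y)
  · refine Multiset.count_eq_zero.2 fun hmem => h ?_
    obtain ⟨c, -, hc⟩ := Multiset.mem_map.1 hmem
    simp only [Prod.ext_iff] at hc
    rw [← hc.2, hc.1]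

lemma map_fst_cells (u w : α → α) : (cells u w).map Prod.fst = univ.val.map u := by
  rw [cells, Multiset.map_map]
  rfl

lemma exists_perm_comp_eq_of_map_eq {β : Type*} [DecidableEq β] {f g : α → β}
    (h : univ.val.map f = univ.val.map g) : ∃ e : Equiv.Perm α, ∀ x, f (e x) = g x := by
  have hfib : ∀ b, Fintype.card {x // g x = b} = Fintype.card {x // f x = b} := fun b => by
    have hcount := congrArg (Multiset.count b) h
    simp only [Multiset.count_map, @eq_comm _ b] at hcount
    simp only [Fintype.card_subtype, card_def, filter_val, hcount]
  exact ⟨Equiv.ofFiberEquiv fun b => Fintype.equivOfCardEq (hfib b), Equiv.ofFiberEquiv_map _⟩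

/-- Hall's theorem for the bipartite multigraph with an edge from row `φ₁ c` and from row `φ₂ c`
to each column `c`: a row set `R` meets at least `2 #R - 1` edges, hence at least `#R` columns. -/
lemma exists_equiv_eq_or_eq [DecidableEq α] (φ₁ φ₂ h : α → α) (j : α)
    (hφ : univ.val.map φ₁ + univ.val.map φ₂ = univ.val + univ.val.map h)
    (hh : ∀ r ≠ j, r ∈ Set.range h) :
    ∃ e : α ≃ α, ∀ c, e c = φ₁ c ∨ e c = φ₂ c := by
  have hcard (φ : α → α) (R : Finset α) :
      Multiset.card ((univ.val.map φ).filter (· ∈ R)) = #{c | φ c ∈ R} := by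
    rw [Multiset.filter_map, Multiset.card_map]
    rfl
  have hhall : ∀ R : Finset α, #R ≤ #{c | ∃ r ∈ R, φ₁ c = r ∨ φ₂ c = r} := by
    intro R
    have hrows : #{c | φ₁ c ∈ R} + #{c | φ₂ c ∈ R} = #R + #{c | h c ∈ R} := by
      have := congrArg (fun s => Multiset.card (s.filter (· ∈ R))) hφ
      simp only [Multiset.filter_add, Multiset.card_add, hcard] at this
      rwa [← Multiset.map_id univ.val, hcard, Function.id_def, filter_univ_mem] at this
    have hsurj : #(R.erase j) ≤ #{c | h c ∈ R} := by
      refine card_le_card_of_surjOn h fun r hr => ?_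
      obtain ⟨hrj, hrR⟩ := mem_erase.1 hr
      obtain ⟨c, rfl⟩ := hh r hrj
      exact ⟨c, by simpa using hrR, rfl⟩
    have h₁ : #{c | φ₁ c ∈ R} ≤ #{c | ∃ r ∈ R, φ₁ c = r ∨ φ₂ c = r} :=
      card_le_card fun c hc => by simp_all [and_or_left, exists_or]
    have h₂ : #{c | φ₂ c ∈ R} ≤ #{c | ∃ r ∈ R, φ₁ c = r ∨ φ₂ c = r} :=
      card_le_card fun c hc => by simp_all [and_or_left, exists_or]
    have := pred_card_le_card_erase (s := R) (a := j)
    omega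
  obtain ⟨f, hf, hfr⟩ := (Fintype.all_card_le_filter_rel_iff_exists_injective _).1 hhall
  refine ⟨(Equiv.ofBijective f (Finite.injective_iff_bijective.1 hf)).symm, fun c => ?_⟩
  obtain ⟨x, rfl⟩ := (Finite.injective_iff_bijective.1 hf).2 c
  have hx : (Equiv.ofBijective f (Finite.injective_iff_bijective.1 hf)).symm (f x) = x :=
    (Equiv.ofBijective f _).symm_apply_apply x
  rw [hx]
  exact (hfr x).imp Eq.symm Eq.symm

lemma map_add_map_eq_bind {β γ : Type*} (s : Multiset γ) (f g : γ → β) :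
    s.map f + s.map g = s.bind fun c => {f c} + {g c} := by
  rw [Multiset.bind_add, Multiset.bind_singleton, Multiset.bind_singleton]

lemma exists_perm_cells_add_cells [DecidableEq α] (φ₁ φ₂ h : α → α) (j : α)
    (hφ : univ.val.map φ₁ + univ.val.map φ₂ = univ.val + univ.val.map h)
    (hh : ∀ r ≠ j, r ∈ Set.range h) :
    ∃ π ρ : Equiv.Perm α, cells id π + cells h ρ = cells φ₁ id + cells φ₂ id := by
  obtain ⟨e, he⟩ := exists_equiv_eq_or_eq φ₁ φ₂ h j hφ hh
  set ψ : α → α := fun c => if e c = φ₁ c then φ₂ c else φ₁ c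
  have hsplit : cells e id + cells ψ id = cells φ₁ id + cells φ₂ id := by
    simp only [cells, map_add_map_eq_bind]
    refine congrArg _ (funext fun c => ?_)
    by_cases hc : e c = φ₁ c
    · simp only [ψ, if_pos hc, hc, id]
    · simp only [ψ, if_neg hc, (he c).resolve_left hc, id]
      exact add_comm _ _
  have hψ : univ.val.map ψ = univ.val.map h := by
    have := congrArg (Multiset.map Prod.fst) hsplit
    simp only [Multiset.map_add, map_fst_cells, Multiset.map_univ_val_equiv, hφ] at this
    exact add_left_cancel this
  obtain ⟨ρ, hρ⟩ := exists_perm_comp_eq_of_map_eq hψ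
  refine ⟨e.symm, ρ, ?_⟩
  rw [← hsplit, ← cells_comp_equiv e id e.symm, ← cells_comp_equiv ψ id ρ]
  congr 1
  · exact congrArg₂ cells (funext fun r => (e.apply_symm_apply r).symm) rfl
  · exact congrArg₂ cells (funext fun r => (hρ r).symm) rfl

lemma map_update_add_singleton [DecidableEq α] (a b : α) :
    univ.val.map (Function.update id b a) + {b} = univ.val + {a} := by
  have hb : b ∈ (univ : Finset α).val := mem_univ b
  have herase : (univ.val.erase b).map (Function.update id b a) = univ.val.erase b := by
    refine (Multiset.map_congr rfl fun x hx => ?_).trans (Multiset.map_id _)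
    exact Function.update_of_ne ((univ.nodup.mem_erase_iff).1 hx).1 _ _
  conv_lhs => rw [← Multiset.cons_erase hb]
  conv_rhs => rw [← Multiset.cons_erase hb]
  rw [Multiset.map_cons, Function.update_self, herase, ← Multiset.singleton_add,
    ← Multiset.singleton_add]
  abel

lemma map_update_add_map_update [DecidableEq α] (i j k : α) :
    univ.val.map (Function.update id k i) + univ.val.map (Function.update id j k) =
      univ.val + univ.val.map (Function.update id j i) := by
  refine add_right_cancel (b := {k} + {j}) ?_
  calc _ = (univ.val.map (Function.update id k i) + {k}) +
        (univ.val.map (Function.update id j k) + {j}) := by abel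
    _ = univ.val + (univ.val.map (Function.update id j i) + {j}) + {k} := by
        rw [map_update_add_singleton, map_update_add_singleton, map_update_add_singleton]
        abel
    _ = _ := by abel

lemma exists_perm_cells_update [DecidableEq α] (i j k : α) (σ τ : Equiv.Perm α) :
    ∃ π ρ : Equiv.Perm α, cells id π + cells (Function.update id j i) ρ =
      cells (Function.update id k i) σ + cells (Function.update id j k) τ := by
  have hmap (u : α → α) (w : Equiv.Perm α) : univ.val.map (u ∘ w.symm) = univ.val.map u := by
    rw [← Multiset.map_map, Multiset.map_univ_val_equiv]
  rw [← cells_comp_equiv (Function.update id k i) σ σ.symm,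
    ← cells_comp_equiv (Function.update id j k) τ τ.symm]
  simp only [Equiv.self_comp_symm]
  refine exists_perm_cells_add_cells _ _ _ j ?_ fun r hr => ⟨r, Function.update_of_ne hr _ _⟩
  rw [hmap, hmap, map_update_add_map_update]

lemma cells_update_add_cells_update_ne [DecidableEq α] {i k : α} (hki : k ≠ i)
    (σ τ π : Equiv.Perm α) :
    cells (Function.update id k i) σ + cells (Function.update id i k) τ ≠
      cells id π + cells id π := by
  -- the cell `(i, σ i)` occurs once on the left and an even number of times on the right
  intro h
  have hcount := congrArg (Multiset.count (i, σ i)) h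
  have hne : ∀ z, Function.update id i k z ≠ i := fun z => by
    rcases eq_or_ne z i with rfl | hz
    · simpa using hki
    · simpa [Function.update_of_ne hz] using hz
  simp only [Multiset.count_add, count_cells, Equiv.symm_apply_apply, id_eq,
    Function.update_of_ne hki.symm, if_true, if_neg (hne _)] at hcount
  omega

end Cells

lemma prod_eq_prod_cells {α : Type*} [Fintype α] (M : Matrix α α F) (u w : α → α) :
    ∏ r, M (u r) (w r) = ((cells u w).map fun p => M p.1 p.2).prod := by
  rw [prod_eq_multiset_prod, cells, Multiset.map_map]
  rfl

lemma prod_mul_prod_eq_of_cells_add_eq {α : Type*} [Fintype α] (M : Matrix α α F)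
    {u₁ w₁ u₂ w₂ u₃ w₃ u₄ w₄ : α → α}
    (h : cells u₁ w₁ + cells u₂ w₂ = cells u₃ w₃ + cells u₄ w₄) :
    (∏ r, M (u₁ r) (w₁ r)) * ∏ r, M (u₂ r) (w₂ r) =
      (∏ r, M (u₃ r) (w₃ r)) * ∏ r, M (u₄ r) (w₄ r) := by
  simp only [prod_eq_prod_cells, ← Multiset.prod_add, ← Multiset.map_add, h]

lemma nuGE_perm_prod {m : ℕ} (M : Matrix (Fin m) (Fin m) F) (σ : Equiv.Perm (Fin m)) :
    nuGE F (perm F M) (∏ r, M r (σ r)) :=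
  nuGE_sum_of_mem (fun σ : Equiv.Perm (Fin m) => ∏ r, M r (σ r)) (mem_univ σ)

lemma ghost0_perm_of_row_eq {m : ℕ} (M : Matrix (Fin m) (Fin m) F) {i j : Fin m} (hij : i ≠ j)
    (hrow : M i = M j) : Ghost0 F (perm F M) := by
  set sw := Equiv.swap i j
  have hrow_swap : ∀ r, M (sw r) = M r := fun r => by
    rcases eq_or_ne r i with rfl | hri
    · rw [Equiv.swap_apply_left, hrow]
    rcases eq_or_ne r j with rfl | hrj
    · rw [Equiv.swap_apply_right, hrow]
    · rw [Equiv.swap_apply_of_ne_of_ne hri hrj]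
  have hprod : ∀ σ : Equiv.Perm (Fin m), ∏ r, M r ((σ * sw) r) = ∏ r, M r (σ r) := fun σ =>
    Fintype.prod_equiv sw _ _ fun r => by rw [← hrow_swap r]; rfl
  set S := ∑ σ ∈ univ.filter (fun σ : Equiv.Perm (Fin m) => σ i < σ j), ∏ r, M r (σ r)
  -- `σ ↦ σ * swap i j` pairs the tracks with `σ i < σ j` with the remaining ones
  have hpaired : ∑ σ ∈ univ.filter (fun σ : Equiv.Perm (Fin m) => ¬ σ i < σ j),
      ∏ r, M r (σ r) = S := by
    refine (sum_equiv (Equiv.mulRight sw) (fun σ => ?_) fun σ _ => (hprod σ).symm).symm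
    have hne : σ i ≠ σ j := σ.injective.ne hij
    simp only [mem_filter, mem_univ, true_and, Equiv.coe_mulRight, Equiv.Perm.coe_mul,
      Function.comp_apply, sw, Equiv.swap_apply_left, Equiv.swap_apply_right, not_lt]
    exact ⟨le_of_lt, fun h => lt_of_le_of_ne h hne⟩
  have hperm : perm F M = S + S := by
    rw [perm, ← sum_filter_add_sum_filter_not _ (fun σ : Equiv.Perm (Fin m) => σ i < σ j),
      hpaired]
  rw [hperm, add_self_eq_nu]
  exact ghost0_nu S

/-- The permutation of `Fin (n + 1)` sending `j` to `k` and `j.succAbove t` to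
`k.succAbove (τ t)`. -/
def extPerm {n : ℕ} (j k : Fin (n + 1)) (τ : Equiv.Perm (Fin n)) : Equiv.Perm (Fin (n + 1)) :=
  (finSuccEquiv' j).trans ((Equiv.optionCongr τ).trans (finSuccEquiv' k).symm)

@[simp] lemma extPerm_apply_self {n : ℕ} (j k : Fin (n + 1)) (τ : Equiv.Perm (Fin n)) :
    extPerm j k τ j = k := by
  simp [extPerm]

@[simp] lemma extPerm_apply_succAbove {n : ℕ} (j k : Fin (n + 1)) (τ : Equiv.Perm (Fin n))
    (t : Fin n) : extPerm j k τ (j.succAbove t) = k.succAbove (τ t) := by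
  simp [extPerm]

lemma extPerm_bijective {n : ℕ} (j : Fin (n + 1)) :
    Function.Bijective fun p : Fin (n + 1) × Equiv.Perm (Fin n) => extPerm j p.1 p.2 := by
  refine (Fintype.bijective_iff_injective_and_card _).2
    ⟨fun ⟨k, τ⟩ ⟨k', τ'⟩ h => ?_, by simp [Fintype.card_perm, Nat.factorial_succ]⟩
  have hk : k = k' := by simpa using congrArg (· j) h
  subst hk
  refine Prod.ext rfl (Equiv.ext fun t => Fin.succAbove_right_injective (p := k) ?_)
  simpa using congrArg (· (j.succAbove t)) h

theorem perm_eq_sum_mul_perm_submatrix {n : ℕ} (M : Matrix (Fin (n + 1)) (Fin (n + 1)) F)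
    (j : Fin (n + 1)) :
    perm F M = ∑ k, M j k * perm F (M.submatrix j.succAbove k.succAbove) := by
  rw [perm, ← Fintype.sum_bijective _ (extPerm_bijective j)
    (fun p => ∏ r, M r (extPerm j p.1 p.2 r)) _ fun _ => rfl, Fintype.sum_prod_type]
  refine sum_congr rfl fun k _ => ?_
  rw [perm, mul_sum]
  refine sum_congr rfl fun τ _ => ?_
  rw [Fin.prod_univ_succAbove _ j]
  simp [Matrix.submatrix_apply]

lemma submatrix_update_self {α R : Type*} [DecidableEq α] (M : Matrix α α R) (i : α) :
    M.submatrix (Function.update id i i) id = M := by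
  rw [show Function.update (id : α → α) i i = id from Function.update_eq_self i id,
    Matrix.submatrix_id_id]

section Square

variable {n : ℕ} (A : Matrix (Fin (n + 1)) (Fin (n + 1)) F)

lemma mul_adjSup_apply (i j : Fin (n + 1)) :
    (A * adjSup F A) i j = perm F (A.submatrix (Function.update id j i) id) := by
  have hrows : Function.update id j i ∘ j.succAbove = j.succAbove :=
    funext fun t => Function.update_of_ne (j.succAbove_ne t) _ _
  rw [perm_eq_sum_mul_perm_submatrix _ j, Matrix.mul_apply]
  refine sum_congr rfl fun k _ => ?_
  rw [Matrix.submatrix_submatrix, hrows, Function.id_comp]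
  simp [adjSup]

lemma perm_submatrix_mul_perm_submatrix (f g : Fin (n + 1) → Fin (n + 1)) :
    perm F (A.submatrix f id) * perm F (A.submatrix g id) =
      ∑ σ : Equiv.Perm (Fin (n + 1)), ∑ τ : Equiv.Perm (Fin (n + 1)),
        (∏ r, A (f r) (σ r)) * ∏ r, A (g r) (τ r) :=
  sum_mul_sum _ _ _ _

lemma ghost0_perm_update_of_ne {i j : Fin (n + 1)} (hij : i ≠ j) :
    Ghost0 F (perm F (A.submatrix (Function.update id j i) id)) :=
  ghost0_perm_of_row_eq _ hij (funext fun c => by simp [Function.update_of_ne hij])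

lemma nuGE_perm_mul_perm_update (i j k : Fin (n + 1)) :
    nuGE F (perm F A * perm F (A.submatrix (Function.update id j i) id))
      (perm F (A.submatrix (Function.update id k i) id) *
        perm F (A.submatrix (Function.update id j k) id)) := by
  rw [perm_submatrix_mul_perm_submatrix]
  refine nuGE_sum fun σ _ => nuGE_sum fun τ _ => ?_
  obtain ⟨π, ρ, hcells⟩ := exists_perm_cells_update i j k σ τ
  rw [← prod_mul_prod_eq_of_cells_add_eq A hcells]
  exact (nuGE_perm_prod A π).mul (nuGE_perm_prod _ ρ)

lemma nuGT_perm_mul_perm_update (hA : Tangible F (perm F A)) {i k : Fin (n + 1)} (hki : k ≠ i) :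
    nuGT F (perm F A * perm F A)
      (perm F (A.submatrix (Function.update id k i) id) *
        perm F (A.submatrix (Function.update id i k) id)) := by
  have hid : Function.update (id : Fin (n + 1) → Fin (n + 1)) i i = id :=
    Function.update_eq_self i id
  have hle := nuGE_perm_mul_perm_update A i i k
  rw [submatrix_update_self] at hle
  refine ⟨hle, fun heq => ?_⟩
  rw [perm_submatrix_mul_perm_submatrix] at heq
  obtain ⟨σ, -, hσ⟩ := exists_nu_sum_eq univ_nonempty fun σ : Equiv.Perm (Fin (n + 1)) =>
    ∑ τ : Equiv.Perm (Fin (n + 1)),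
      (∏ r, A (Function.update id k i r) (σ r)) * ∏ r, A (Function.update id i k r) (τ r)
  obtain ⟨τ, -, hτ⟩ := exists_nu_sum_eq univ_nonempty fun τ : Equiv.Perm (Fin (n + 1)) =>
      (∏ r, A (Function.update id k i r) (σ r)) * ∏ r, A (Function.update id i k r) (τ r)
  obtain ⟨π, ρ, hcells⟩ := exists_perm_cells_update i i k σ τ
  rw [hid] at hcells
  have hν : nu ((∏ r, A r (π r)) * ∏ r, A r (ρ r)) = nu (perm F A * perm F A) := by
    rw [heq, hσ, hτ]
    exact congrArg nu (prod_mul_prod_eq_of_cells_add_eq A hcells)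
  have hρ := nu_eq_of_nu_mul_eq hA.isUnit (nuGE_perm_prod A π) (nuGE_perm_prod A ρ) hν
  have hπ := nu_eq_of_nu_mul_eq hA.isUnit (nuGE_perm_prod A ρ) (nuGE_perm_prod A π)
    (by rwa [mul_comm])
  by_cases hπρ : π = ρ
  · subst hπρ
    exact cells_update_add_cells_update_ne hki σ τ π hcells.symm
  · exact hA (ghost0_sum_of_nu_eq_of_nu_eq (mem_univ π) (mem_univ ρ) hπρ hπ hρ)

lemma sum_perm_update_mul_perm_update (hA : Tangible F (perm F A)) (i j : Fin (n + 1)) :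
    ∑ k, perm F (A.submatrix (Function.update id k i) id) *
        perm F (A.submatrix (Function.update id j k) id) =
      perm F A * perm F (A.submatrix (Function.update id j i) id) := by
  rw [← add_sum_erase _ _ (mem_univ i), submatrix_update_self]
  refine add_sum_eq_left fun k hk => ?_
  have hki := ne_of_mem_erase hk
  rcases eq_or_ne i j with rfl | hij
  · rw [submatrix_update_self]
    exact add_eq_left_of_nuGT (nuGT_perm_mul_perm_update A hA hki)
  · exact add_eq_left_of_ghost0 ((ghost0_perm_update_of_ne A hij).mul_left _)
      (nuGE_perm_mul_perm_update A i j k)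

theorem mul_adjSup_mul_self (hA : Tangible F (perm F A)) :
    A * adjSup F A * (A * adjSup F A) = perm F A • (A * adjSup F A) := by
  ext i j
  rw [Matrix.mul_apply]
  simp only [mul_adjSup_apply, Matrix.smul_apply, smul_eq_mul]
  exact sum_perm_update_mul_perm_update A hA i j

end Square

end Supertropical

open Supertropical in
/-- For a nonsingular square matrix `A` over a supertropical
semifield (with `d = |A|⁻¹`, `A^∇ = d • adj(A)`, `I_A = A A^∇`, `Ā = I_A A`),
one has `Ā A^∇ I_A = I_A` and `I_A Ā = Ā`. -/
theorem stmt3 {F : Type*} [SupertropicalSemifield F] {n : ℕ}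
    (A : Matrix (Fin (n + 1)) (Fin (n + 1)) F)
    (hA : Tangible F (perm F A))
    (d : F) (hd : perm F A * d = 1) :
    (((A * (d • adjSup F A)) * A) * (d • adjSup F A) * (A * (d • adjSup F A)) =
        A * (d • adjSup F A)) ∧
      (A * (d • adjSup F A)) * ((A * (d • adjSup F A)) * A) =
        (A * (d • adjSup F A)) * A := by
  have hidem : A * (d • adjSup F A) * (A * (d • adjSup F A)) = A * (d • adjSup F A) := by
    rw [Matrix.mul_smul, Matrix.smul_mul, Matrix.mul_smul, mul_adjSup_mul_self A hA, smul_smul,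
      smul_smul, mul_assoc, mul_comm d (perm F A), hd, mul_one]
  exact ⟨by rw [Matrix.mul_assoc _ A, hidem, hidem], by rw [← Matrix.mul_assoc, hidem]⟩
end

section
/- Let B be a supertropically symmetric bilinear form on the supertropical vector space Fv₁ + Fv₂ over a supertropical semifield F. If v₁ and v₂ are both g-isotropic, then B is supertropically alternate on Fv₁ + Fv₂: for all γ₁, γ₂ ∈ F, the vector γ₁v₁ + γ₂v₂ is g-isotropic. -/
namespace Supertropical

open SupertropicalSemifield

variable {F : Type*} [SupertropicalSemifield F]

lemma aux_ghost0_add {a b : F} (ha : Ghost0 F a) (hb : Ghost0 F b) :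
    Ghost0 F (a + b) := by
  unfold Ghost0 at *
  rw [nu_add, ha, hb]

lemma aux_ghost0_self_add (a : F) : Ghost0 F (a + a) := by
  unfold Ghost0
  rw [add_eq_nu a a rfl, nu_idem]

lemma aux_ghost0_eq_add {g : F} (hg : Ghost0 F g) : g + g = g := by
  rw [add_eq_nu g g rfl, hg]

lemma aux_ghost0_mul (x : F) {g : F} (hg : Ghost0 F g) : Ghost0 F (x * g) := by
  have h : x * g + x * g = x * g := by rw [← mul_add, aux_ghost0_eq_add hg]
  have h2 := add_eq_nu (x * g) (x * g) rfl
  exact h2.symm.trans h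

lemma aux_ghostV_ghost0 {c : F} (hc : GhostV F c) : Ghost0 F c := by
  obtain ⟨u, hu⟩ := hc
  have : c = u + u := by rw [hu, smul_eq_mul, add_mul, one_mul]
  rw [this]
  exact aux_ghost0_self_add u

lemma aux_gsv_ghost0 {x y : F} (h : GSV F x y) (hy : Ghost0 F y) :
    Ghost0 F x := by
  obtain ⟨c, hc, rfl⟩ := h
  exact aux_ghost0_add hy (aux_ghostV_ghost0 hc)

variable {V : Type*} [AddCommMonoid V] [Module F V]

lemma aux_B_double_left {B : V → V → F} (hB : IsBilinear F B) (u w : V) :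
    Ghost0 F (B (u + u) w) :=
  aux_gsv_ghost0 ((hB.1 w).1 u u) (aux_ghost0_self_add _)

lemma aux_B_double_right {B : V → V → F} (hB : IsBilinear F B) (u w : V) :
    Ghost0 F (B w (u + u)) :=
  aux_gsv_ghost0 ((hB.2 w).1 u u) (aux_ghost0_self_add _)

lemma aux_smul_double {γ : F} (hγ : ¬ Tangible F γ) (v : V) :
    γ • v = γ • v + γ • v := by
  have hg : Ghost0 F γ := not_not.mp hγ
  calc γ • v = (γ + γ) • v := by rw [aux_ghost0_eq_add hg]
    _ = γ • v + γ • v := add_smul γ γ v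

end Supertropical

open Supertropical in
/-- If `B` is a supertropically symmetric bilinear form on the
space `Fv₁ + Fv₂` and both `v₁` and `v₂` are g-isotropic, then `B` is
supertropically alternate: every `γ₁v₁ + γ₂v₂` is g-isotropic. -/
theorem stmt6 {F : Type*} [SupertropicalSemifield F]
    {V : Type*} [AddCommMonoid V] [Module F V]
    (v₁ v₂ : V) (hspan : Submodule.span F ({v₁, v₂} : Set V) = ⊤)
    (B : V → V → F) (hB : IsBilinear F B) (hsym : SupSymmetric F B)
    (h1 : Ghost0 F (B v₁ v₁)) (h2 : Ghost0 F (B v₂ v₂)) :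
    ∀ γ₁ γ₂ : F, Ghost0 F (B (γ₁ • v₁ + γ₂ • v₂) (γ₁ • v₁ + γ₂ • v₂)) := by
  intro γ₁ γ₂
  have haa : Ghost0 F (B (γ₁ • v₁) (γ₁ • v₁)) := by
    by_cases hγ₁ : Tangible F γ₁
    · have ea : B (γ₁ • v₁) (γ₁ • v₁) = γ₁ • B v₁ (γ₁ • v₁) :=
        (hB.1 (γ₁ • v₁)).2 γ₁ hγ₁ v₁
      have eb : B v₁ (γ₁ • v₁) = γ₁ • B v₁ v₁ := (hB.2 v₁).2 γ₁ hγ₁ v₁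
      rw [ea, eb, smul_eq_mul, smul_eq_mul]
      exact aux_ghost0_mul γ₁ (aux_ghost0_mul γ₁ h1)
    · rw [aux_smul_double hγ₁ v₁]
      exact aux_B_double_left hB _ _
  have hbb : Ghost0 F (B (γ₂ • v₂) (γ₂ • v₂)) := by
    by_cases hγ₂ : Tangible F γ₂
    · have ea : B (γ₂ • v₂) (γ₂ • v₂) = γ₂ • B v₂ (γ₂ • v₂) :=
        (hB.1 (γ₂ • v₂)).2 γ₂ hγ₂ v₂
      have eb : B v₂ (γ₂ • v₂) = γ₂ • B v₂ v₂ := (hB.2 v₂).2 γ₂ hγ₂ v₂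
      rw [ea, eb, smul_eq_mul, smul_eq_mul]
      exact aux_ghost0_mul γ₂ (aux_ghost0_mul γ₂ h2)
    · rw [aux_smul_double hγ₂ v₂]
      exact aux_B_double_left hB _ _
  have hcross : Ghost0 F (B (γ₁ • v₁) (γ₂ • v₂) + B (γ₂ • v₂) (γ₁ • v₁)) := by
    by_cases hγ₁ : Tangible F γ₁
    · by_cases hγ₂ : Tangible F γ₂
      · have e1 : B (γ₁ • v₁) (γ₂ • v₂) = γ₁ * (γ₂ * B v₁ v₂) := by
          have ea : B (γ₁ • v₁) (γ₂ • v₂) = γ₁ • B v₁ (γ₂ • v₂) :=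
            (hB.1 (γ₂ • v₂)).2 γ₁ hγ₁ v₁
          have eb : B v₁ (γ₂ • v₂) = γ₂ • B v₁ v₂ := (hB.2 v₁).2 γ₂ hγ₂ v₂
          rw [ea, eb, smul_eq_mul, smul_eq_mul]
        have e2 : B (γ₂ • v₂) (γ₁ • v₁) = γ₂ * (γ₁ * B v₂ v₁) := by
          have ea : B (γ₂ • v₂) (γ₁ • v₁) = γ₂ • B v₂ (γ₁ • v₁) :=
            (hB.1 (γ₁ • v₁)).2 γ₂ hγ₂ v₂
          have eb : B v₂ (γ₁ • v₁) = γ₁ • B v₂ v₁ := (hB.2 v₂).2 γ₁ hγ₁ v₁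
          rw [ea, eb, smul_eq_mul, smul_eq_mul]
        have e3 : B (γ₁ • v₁) (γ₂ • v₂) + B (γ₂ • v₂) (γ₁ • v₁)
            = (γ₁ * γ₂) * (B v₁ v₂ + B v₂ v₁) := by rw [e1, e2]; ring
        rw [e3]
        exact aux_ghost0_mul _ (hsym v₁ v₂)
      · rw [aux_smul_double hγ₂ v₂]
        exact aux_ghost0_add (aux_B_double_right hB _ _)
          (aux_B_double_left hB _ _)
    · rw [aux_smul_double hγ₁ v₁]
      exact aux_ghost0_add (aux_B_double_left hB _ _)
        (aux_B_double_right hB _ _)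
  obtain ⟨c1, hc1, e1⟩ := (hB.2 (γ₁ • v₁ + γ₂ • v₂)).1 (γ₁ • v₁) (γ₂ • v₂)
  obtain ⟨c2, hc2, e2⟩ := (hB.1 (γ₁ • v₁)).1 (γ₁ • v₁) (γ₂ • v₂)
  obtain ⟨c3, hc3, e3⟩ := (hB.1 (γ₂ • v₂)).1 (γ₁ • v₁) (γ₂ • v₂)
  dsimp only at e1 e2 e3
  have key : B (γ₁ • v₁ + γ₂ • v₂) (γ₁ • v₁ + γ₂ • v₂)
      = B (γ₁ • v₁) (γ₁ • v₁) +
        ((B (γ₁ • v₁) (γ₂ • v₂) + B (γ₂ • v₂) (γ₁ • v₁)) +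
          (B (γ₂ • v₂) (γ₂ • v₂) + (c2 + (c3 + c1)))) := by
    rw [e1, e2, e3]; ring
  rw [key]
  exact aux_ghost0_add haa (aux_ghost0_add hcross (aux_ghost0_add hbb
    (aux_ghost0_add (aux_ghostV_ghost0 hc2)
      (aux_ghost0_add (aux_ghostV_ghost0 hc3) (aux_ghostV_ghost0 hc1)))))
end

section
/- Let B be a supertropically symmetric bilinear form on a supertropical vector space V over a supertropical semifield F, and suppose V is spanned by a set of g-isotropic vectors (every element of V is an F-linear combination of g-isotropic vectors). Then B is supertropically alternate: every vector of V is g-isotropic. -/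
open Supertropical in
/-- STATEMENT 7: If `B` is a supertropically symmetric bilinear form on `V` and
`V` is spanned by g-isotropic vectors, then `B` is supertropically alternate:
every vector of `V` is g-isotropic. -/
theorem stmt7 {F : Type*} [SupertropicalSemifield F]
    {V : Type*} [AddCommMonoid V] [Module F V]
    (B : V → V → F) (hB : IsBilinear F B) (hsym : SupSymmetric F B)
    (hspan : Submodule.span F {u : V | Ghost0 F (B u u)} = ⊤) :
    ∀ v : V, Ghost0 F (B v v) := by
  classical
  have hnu : ∀ a : F, SupertropicalSemifield.nu a = a + a := fun a =>
    (SupertropicalSemifield.add_eq_nu a a rfl).symm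
  -- Ghost0 a ↔ a + a = a
  have hg_iff : ∀ a : F, Ghost0 F a ↔ a + a = a := by
    intro a
    unfold Ghost0
    rw [hnu a]
  have hg_add : ∀ a b : F, Ghost0 F a → Ghost0 F b → Ghost0 F (a + b) := by
    intro a b ha hb
    rw [hg_iff] at *
    calc (a + b) + (a + b) = (a + a) + (b + b) := by ring
    _ = a + b := by rw [ha, hb]
  have hg_mul : ∀ x c : F, Ghost0 F c → Ghost0 F (x * c) := by
    intro x c hc
    rw [hg_iff] at *
    rw [← mul_add, hc]
  -- nu a itself is ghost
  have hg_nu : ∀ a : F, Ghost0 F (a + a) := by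
    intro a
    show SupertropicalSemifield.nu (a + a) = a + a
    rw [← hnu a, SupertropicalSemifield.nu_idem]
  -- GhostV on F implies Ghost0
  have hgv : ∀ c : F, GhostV F c → Ghost0 F c := by
    rintro c ⟨u, rfl⟩
    have : ((1 : F) + 1) • u = u + u := by
      rw [smul_eq_mul, add_mul, one_mul]
    rw [this]
    exact hg_nu u
  -- if b = a + c with c ghost and a ghost, then b ghost
  have hgs : ∀ a b : F, GSV F b a → Ghost0 F a → Ghost0 F b := by
    rintro a b ⟨c, hc, rfl⟩ ha
    exact hg_add a c ha (hgv c hc)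
  -- if u + u = u then B u u is ghost
  have hdup : ∀ u : V, u + u = u → Ghost0 F (B u u) := by
    intro u hu
    have h1 := (hB.1 u).1 u u
    rw [hu] at h1
    exact hgs _ _ h1 (hg_nu (B u u))
  obtain ⟨hB1, hB2⟩ := hB
  intro v
  have hv : v ∈ Submodule.span F {u : V | Ghost0 F (B u u)} := by
    rw [hspan]; trivial
  induction hv using Submodule.span_induction with
  | mem x hx => exact hx
  | zero => exact hdup 0 (by simp)
  | add x y _ _ hx hy =>
      -- B (x+y) (x+y) GSV (B x (x+y) + B y (x+y))
      have h1 := (hB1 (x + y)).1 x y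
      have h2 := (hB2 x).1 x y
      have h3 := (hB2 y).1 x y
      obtain ⟨c1, hc1, e1⟩ := h1
      obtain ⟨c2, hc2, e2⟩ := h2
      obtain ⟨c3, hc3, e3⟩ := h3
      dsimp only at e1 e2 e3
      rw [e1, e2, e3]
      have hsym' := hsym x y
      have : B x x + B x y + c2 + (B y x + B y y + c3) + c1 =
          ((B x x + B y y) + (B x y + B y x)) + (c2 + (c3 + c1)) := by ring
      rw [this]
      exact hg_add _ _ (hg_add _ _ (hg_add _ _ hx hy) hsym')
        (hg_add _ _ (hgv _ hc2) (hg_add _ _ (hgv _ hc3) (hgv _ hc1)))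
  | smul a x _ hx =>
      by_cases ha : Tangible F a
      · have e1 : B (a • x) (a • x) = a • B x (a • x) := (hB1 (a • x)).2 a ha x
        have e2 : B x (a • x) = a • B x x := (hB2 x).2 a ha x
        rw [e1, e2, smul_eq_mul, smul_eq_mul]
        exact hg_mul a _ (hg_mul a _ hx)
      · -- a is ghost or zero: nu a = a, so a + a = a, hence a•x + a•x = a•x
        have haa : a + a = a := by
          unfold Tangible at ha
          push_neg at ha
          rw [← hnu a, ha]
        exact hdup (a • x) (by rw [← add_smul, haa])
end

section
/- Let B be a supertropically symmetric bilinear form on a supertropical vector space V over a supertropical semifield F, and let v, w ∈ V. If ⟨v,w⟩ + ⟨w,v⟩ ≥_ν ⟨v,v⟩ + ⟨w,w⟩, then v + w is g-isotropic, i.e. ⟨v+w, v+w⟩ is ghost or zero. -/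
open Supertropical in
/-- STATEMENT 9: For a supertropically symmetric bilinear form, if
`⟨v,w⟩ + ⟨w,v⟩ ≥_ν ⟨v,v⟩ + ⟨w,w⟩` then `v + w` is g-isotropic. -/
theorem stmt9 {F : Type*} [SupertropicalSemifield F]
    {V : Type*} [AddCommMonoid V] [Module F V]
    (B : V → V → F) (hB : IsBilinear F B) (hsym : SupSymmetric F B)
    (v w : V) (h : nuGE F (B v w + B w v) (B v v + B w w)) :
    Ghost0 F (B (v + w) (v + w)) := by

  classical
  obtain ⟨hB1, hB2⟩ := hB
  -- helper: GhostV in F means fixed by nu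
  have ghostV_ghost : ∀ c : F, GhostV F c → SupertropicalSemifield.nu c = c := by
    rintro c ⟨u, rfl⟩
    have h11 : ((1:F) + 1) • u = u + u := by
      rw [smul_eq_mul, add_mul, one_mul]
    rw [h11, SupertropicalSemifield.add_eq_nu u u rfl, SupertropicalSemifield.nu_idem]
  have ghost_add : ∀ a b : F, SupertropicalSemifield.nu a = a →
      SupertropicalSemifield.nu b = b → SupertropicalSemifield.nu (a + b) = a + b := by
    intro a b ha hb
    rw [SupertropicalSemifield.nu_add, ha, hb]
  obtain ⟨c1, hc1, e1⟩ := (hB1 (v + w)).1 v w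
  obtain ⟨c2, hc2, e2⟩ := (hB2 v).1 v w
  obtain ⟨c3, hc3, e3⟩ := (hB2 w).1 v w
  have hc1' := ghostV_ghost c1 hc1
  have hc2' := ghostV_ghost c2 hc2
  have hc3' := ghostV_ghost c3 hc3
  set P := B v w + B w v with hP
  set Q := B v v + B w w with hQ
  have hPg : SupertropicalSemifield.nu P = P := hsym v w
  -- Q + P = P
  have hQP : Q + P = P := by
    by_cases hne : SupertropicalSemifield.nu Q = SupertropicalSemifield.nu P
    · rw [SupertropicalSemifield.add_eq_nu Q P hne, hne, hPg]
    · rcases SupertropicalSemifield.add_cases Q P hne with hq | hp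
      · exfalso
        apply hne
        have : SupertropicalSemifield.nu (Q + P) = SupertropicalSemifield.nu Q := by rw [hq]
        rw [SupertropicalSemifield.nu_add] at this
        have h' : SupertropicalSemifield.nu P + SupertropicalSemifield.nu Q
            = SupertropicalSemifield.nu P := h
        rw [add_comm] at this
        rw [h'] at this
        exact this.symm
      · exact hp
  have hSg : SupertropicalSemifield.nu (Q + P) = Q + P := by rw [hQP]; exact hPg
  -- assemble
  simp only [] at e1 e2 e3
  have key : B (v + w) (v + w) = (Q + P) + (c2 + c3 + c1) := by
    rw [e1, e2, e3, hQ, hP]; ring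
  show SupertropicalSemifield.nu (B (v + w) (v + w)) = B (v + w) (v + w)
  rw [key]
  exact ghost_add _ _ hSg (ghost_add _ _ (ghost_add _ _ hc2' hc3') hc1')
end

section
/- Let B be a supertropically symmetric bilinear form on a supertropical vector space V over a supertropical semifield F, and let v, w ∈ V. If {v,w} is weakly Cauchy-Schwartz, then v and w are compatible; if {v,w} is Cauchy-Schwartz, then v and w are strictly compatible. -/
section Aux

open SupertropicalSemifield

variable {F : Type*} [SupertropicalSemifield F]

lemma st_add_idem {g : F} (hg : nu g = g) : g + g = g := by
  rw [add_eq_nu g g rfl, hg]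

lemma st_total (g h : F) (hg : nu g = g) (hh : nu h = h) :
    g + h = g ∨ g + h = h := by
  by_cases e : nu g = nu h
  · left; rw [add_eq_nu g h e, hg]
  · exact add_cases g h e

lemma st_one_mul {g : F} (hg : nu g = g) : nu 1 * g = g := by
  conv_lhs => rw [← hg]
  rw [← nu_mul, one_mul, hg]

lemma st_cancel {g a b : F} (hg : nu g = g) (hg0 : g ≠ 0)
    (ha : nu a = a) (hb : nu b = b) (h : g * a = g * b) : a = b := by
  obtain ⟨t, ht, htg⟩ := nu_onto g hg hg0
  obtain ⟨s, _, hts⟩ := tangible_inv t ht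
  have h1 : nu s * g = nu 1 := by rw [← htg, ← nu_mul, mul_comm s t, hts]
  calc a = nu 1 * a := (st_one_mul ha).symm
    _ = nu s * (g * a) := by rw [← h1]; ring
    _ = nu s * (g * b) := by rw [h]
    _ = nu 1 * b := by rw [← h1]; ring
    _ = b := st_one_mul hb

lemma st_key1 {a b c : F} (ha : nu a = a) (hb : nu b = b) (hc : nu c = c)
    (h : a * b + c * c = a * b) : a + b + c = a + b := by
  by_cases hc0 : c = 0
  · rw [hc0, add_zero]
  have hab : nu (a + b) = a + b := by rw [nu_add, ha, hb]
  rcases st_total (a + b) c hab hc with h1 | h1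
  · exact h1
  have hac : a + c = c := by
    calc a + c = a + (a + b + c) := by rw [h1]
      _ = (a + a) + (b + c) := by ring
      _ = a + (b + c) := by rw [st_add_idem ha]
      _ = c := by rw [← add_assoc, h1]
  have hbc : b + c = c := by
    calc b + c = b + (a + b + c) := by rw [h1]
      _ = (b + b) + (a + c) := by ring
      _ = b + (a + c) := by rw [st_add_idem hb]
      _ = c := by rw [show b + (a + c) = a + b + c by ring, h1]
  have h2 : a * b + c * c = c * c := by
    calc a * b + c * c = a * b + (a * c + c * c) := by
          rw [show a * c + c * c = (a + c) * c by ring, hac]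
      _ = (a * b + a * c) + c * c := by ring
      _ = a * c + c * c := by rw [show a * b + a * c = a * (b + c) by ring, hbc]
      _ = c * c := by rw [show a * c + c * c = (a + c) * c by ring, hac]
  have habcc : a * b = c * c := h.symm.trans h2
  have hacc : a * c = c * c := by
    calc a * c = a * (b + c) := by rw [hbc]
      _ = a * b + a * c := by ring
      _ = c * c + a * c := by rw [habcc]
      _ = (a + c) * c := by ring
      _ = c * c := by rw [hac]
  have hbcc : b * c = c * c := by
    calc b * c = b * (a + c) := by rw [hac]
      _ = a * b + b * c := by ring
      _ = c * c + b * c := by rw [habcc]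
      _ = (b + c) * c := by ring
      _ = c * c := by rw [hbc]
  have hA : a = c := st_cancel hc hc0 ha hc (by rw [mul_comm c a, mul_comm c c]; exact hacc)
  have hB : b = c := st_cancel hc hc0 hb hc (by rw [mul_comm c b, mul_comm c c]; exact hbcc)
  rw [hA, hB, st_add_idem hc, st_add_idem hc]

lemma st_key2' {a b c d : F}
    (hab : a + b = a) (hcd : c + d = c) (heq : a + b = c + d)
    (h : a * b + (c * c + d * d) = a * b) : a * b = c * c + d * d := by
  have hac : a = c := by rw [← hab, heq, hcd]
  have hdc : d + c = c := by rw [add_comm]; exact hcd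
  have e1 : c * c + d * d = c * c := by
    calc c * c + d * d = d * d + c * c := by ring
      _ = d * d + (d * c + c * c) := by
          rw [show d * c + c * c = (d + c) * c by ring, hdc]
      _ = (d * d + d * c) + c * c := by ring
      _ = d * c + c * c := by rw [show d * d + d * c = d * (d + c) by ring, hdc]
      _ = (d + c) * c := by ring
      _ = c * c := by rw [hdc]
  have e2 : a * b + a * a = a * a := by
    calc a * b + a * a = a * (b + a) := by ring
      _ = a * a := by rw [add_comm b a, hab]
  have e3 : a * a = c * c + d * d := by rw [hac, e1]
  calc a * b = a * b + (c * c + d * d) := h.symm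
    _ = a * b + a * a := by rw [← e3]
    _ = a * a := e2
    _ = c * c + d * d := e3

lemma st_key2 {a b c d : F} (ha : nu a = a) (hb : nu b = b)
    (hc : nu c = c) (hd : nu d = d)
    (h : a * b + (c * c + d * d) = a * b)
    (heq : a + b = c + d) : a * b = c * c + d * d := by
  rcases st_total a b ha hb with h1 | h1 <;> rcases st_total c d hc hd with h2 | h2
  · exact st_key2' h1 h2 heq h
  · have := st_key2' h1 (by rw [add_comm]; exact h2)
      (by rw [heq, add_comm]) (by rw [add_comm (d*d) (c*c)]; exact h)
    rw [this, add_comm]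
  · have := st_key2' (by rw [add_comm]; exact h1) h2
      (by rw [add_comm b a, heq]) (by rw [mul_comm b a]; exact h)
    rw [mul_comm a b, this]
  · have := st_key2' (a := b) (b := a) (c := d) (d := c)
      (by rw [add_comm b a]; exact h1) (by rw [add_comm d c]; exact h2)
      (by rw [add_comm b a, heq, add_comm c d])
      (by rw [mul_comm b a, add_comm (d * d) (c * c)]; exact h)
    rw [mul_comm a b, this, add_comm]

lemma st_stmt11_aux (α β γ δ : F) :
    (nu (α * β) + nu (γ ^ 2 + δ ^ 2) = nu (α * β) →
      nu (α + β) + nu (γ + δ) = nu (α + β)) ∧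
    ((nu (α * β) + nu (γ ^ 2 + δ ^ 2) = nu (α * β) ∧
        nu (α * β) ≠ nu (γ ^ 2 + δ ^ 2)) →
      (nu (α + β) + nu (γ + δ) = nu (α + β)) ∧ nu (α + β) ≠ nu (γ + δ)) := by
  have ha : nu (nu α) = nu α := nu_idem α
  have hb : nu (nu β) = nu β := nu_idem β
  have hc : nu (nu γ) = nu γ := nu_idem γ
  have hd : nu (nu δ) = nu δ := nu_idem δ
  rw [nu_mul α β, pow_two γ, pow_two δ, nu_add (γ * γ) (δ * δ), nu_mul γ γ,
    nu_mul δ δ, nu_add α β, nu_add γ δ]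
  set a := nu α
  set b := nu β
  set c := nu γ
  set d := nu δ
  have part1 : a * b + (c * c + d * d) = a * b → (a + b) + (c + d) = a + b := by
    intro h
    have hcc : nu (c * c) = c * c := by rw [nu_mul, hc]
    have hdd : nu (d * d) = d * d := by rw [nu_mul, hd]
    have h_c : a * b + c * c = a * b := by
      calc a * b + c * c = (a * b + (c * c + d * d)) + c * c := by rw [h]
        _ = a * b + ((c * c + c * c) + d * d) := by ring
        _ = a * b + (c * c + d * d) := by rw [st_add_idem hcc]
        _ = a * b := h
    have h_d : a * b + d * d = a * b := by
      calc a * b + d * d = (a * b + (c * c + d * d)) + d * d := by rw [h]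
        _ = a * b + (c * c + (d * d + d * d)) := by ring
        _ = a * b + (c * c + d * d) := by rw [st_add_idem hdd]
        _ = a * b := h
    have k1 := st_key1 ha hb hc h_c
    have k2 := st_key1 ha hb hd h_d
    calc (a + b) + (c + d) = (a + b + c) + d := by ring
      _ = (a + b) + d := by rw [k1]
      _ = a + b := k2
  constructor
  · exact part1
  · rintro ⟨h, hne⟩
    exact ⟨part1 h, fun heq => hne (st_key2 ha hb hc hd h heq)⟩

end Aux

open Supertropical in
/-- STATEMENT 11: A weakly Cauchy-Schwartz pair is compatible; a Cauchy-Schwartz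
pair is strictly compatible. -/
theorem stmt11 {F : Type*} [SupertropicalSemifield F]
    {V : Type*} [AddCommMonoid V] [Module F V]
    (B : V → V → F) (hB : IsBilinear F B) (hsym : SupSymmetric F B) (v w : V) :
    (WeakCS F B v w → Compatible F B v w) ∧
      (CS F B v w → StrictlyCompatible F B v w) := by
  obtain ⟨h1, h2⟩ := st_stmt11_aux (B v v) (B w w) (B v w) (B w v)
  refine ⟨fun hW => h1 hW, fun hC => ?_⟩
  have h := h2 hC
  exact ⟨h.1, Or.inr ⟨h.1, h.2⟩⟩
end

section
/- Let B be a supertropically symmetric bilinear form on a supertropical vector space V over a supertropical semifield F. Let b₁,…,b_m ∈ V be pairwise g-orthogonal (⟨bᵢ,bⱼ⟩ is ghost or zero for i ≠ j) with each ⟨bⱼ,bⱼ⟩ ≠ 0, and choose tangible βⱼ ∈ T with βⱼ ≅_ν ⟨bⱼ,bⱼ⟩. For v ∈ V set v′ := v + Σⱼ (⟨v,bⱼ⟩/βⱼ)·bⱼ. Then for each i, ⟨v′, bᵢ⟩ is ghost or zero; hence v′ is g-orthogonal to every element of the subspace spanned by b₁,…,b_m. -/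
section GramSchmidtHelpers

open SupertropicalSemifield Supertropical

variable {F : Type*} [SupertropicalSemifield F]

lemma nu_eq_add_self' (a : F) : nu a = a + a := (add_eq_nu a a rfl).symm

lemma ghost0_iff' (a : F) : Ghost0 F a ↔ a + a = a := by
  unfold Ghost0; rw [nu_eq_add_self' a]

lemma ghost0_nu' (a : F) : Ghost0 F (nu a) := nu_idem a

lemma ghost0_zero' : Ghost0 F (0 : F) := nu_zero

lemma ghost0_add' {a b : F} (ha : Ghost0 F a) (hb : Ghost0 F b) : Ghost0 F (a + b) := by
  show nu (a + b) = a + b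
  rw [nu_add, ha, hb]

lemma ghost0_mul_left' {a : F} (ha : Ghost0 F a) (b : F) : Ghost0 F (a * b) := by
  rw [ghost0_iff'] at ha ⊢
  rw [← add_mul, ha]

lemma ghost0_mul_right' {b : F} (hb : Ghost0 F b) (a : F) : Ghost0 F (a * b) := by
  rw [ghost0_iff'] at hb ⊢
  rw [← mul_add, hb]

lemma ghost0_two' : Ghost0 F ((1 : F) + 1) := by
  rw [ghost0_iff', ← nu_eq_add_self' (1 : F), ← nu_eq_add_self' (nu (1 : F))]
  exact nu_idem 1

lemma ghost0_of_ghostV' {h : F} (hg : GhostV F h) : Ghost0 F h := by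
  obtain ⟨u, rfl⟩ := hg
  rw [smul_eq_mul]
  exact ghost0_mul_left' ghost0_two' u

lemma ghost0_of_not_tangible {a : F} (h : ¬ Tangible F a) : Ghost0 F a :=
  not_not.mp h

/-- If `φ` is additive up to ghosts and `x + x = x`, then `φ x` is ghost. -/
lemma ghost0_of_self_add {V : Type*} [AddCommMonoid V] [Module F V]
    (φ : V → F) (hadd : ∀ v w : V, GSV F (φ (v + w)) (φ v + φ w))
    (x : V) (hx : x + x = x) : Ghost0 F (φ x) := by
  obtain ⟨h, hg, he⟩ := hadd x x
  have hg' : Ghost0 F h := ghost0_of_ghostV' hg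
  rw [hx] at he
  have he2 : φ x = nu (φ x) + h := by
    conv_lhs => rw [he]
    rw [← nu_eq_add_self']
  have hstep : nu (φ x) = nu (φ x) + h := by
    calc nu (φ x) = nu (nu (φ x) + h) := by rw [← he2]
      _ = nu (φ x) + h := by rw [nu_add, nu_idem, hg']
  show nu (φ x) = φ x
  exact hstep.trans he2.symm

lemma bilin_add_sum {V : Type*} [AddCommMonoid V] [Module F V]
    (B : V → V → F) (hB : IsBilinear F B) (u v : V)
    {ι : Type*} (s : Finset ι) (f : ι → V) :
    ∃ h, Ghost0 F h ∧
      B (v + ∑ j ∈ s, f j) u = B v u + ∑ j ∈ s, B (f j) u + h := by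
  classical
  induction s using Finset.induction with
  | empty => exact ⟨0, ghost0_zero', by simp⟩
  | @insert j s hj ih =>
    obtain ⟨h, hg, he⟩ := ih
    obtain ⟨h2, hg2, he2⟩ := (hB.1 u).1 (v + ∑ k ∈ s, f k) (f j)
    simp only at he2
    refine ⟨h + h2, ghost0_add' hg (ghost0_of_ghostV' hg2), ?_⟩
    rw [Finset.sum_insert hj, Finset.sum_insert hj]
    have hrw : v + (f j + ∑ k ∈ s, f k) = (v + ∑ k ∈ s, f k) + f j := by
      rw [add_comm (f j), ← add_assoc]
    rw [hrw, he2, he]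
    ring

end GramSchmidtHelpers

open Supertropical in
/-- STATEMENT 13 (Gram-Schmidt orthogonality): Let `b₁,…,b_m` be pairwise
g-orthogonal with each `⟨bⱼ,bⱼ⟩ ≠ 0`, let `βⱼ` be tangible with
`βⱼ ≅_ν ⟨bⱼ,bⱼ⟩` (with multiplicative inverses `βⱼ⁻¹`), and set
`v′ = v + Σⱼ (⟨v,bⱼ⟩/βⱼ) bⱼ`.  Then `⟨v′,bᵢ⟩` is ghost or zero for each `i`,
and `v′` is g-orthogonal to every element of the span of the `bⱼ`. -/
theorem stmt13 {F : Type*} [SupertropicalSemifield F]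
    {V : Type*} [AddCommMonoid V] [Module F V]
    (B : V → V → F) (hB : IsBilinear F B) (hsym : SupSymmetric F B)
    {m : ℕ} (b : Fin m → V)
    (horth : ∀ i j, i ≠ j → Ghost0 F (B (b i) (b j)))
    (hnz : ∀ j, B (b j) (b j) ≠ 0)
    (β βinv : Fin m → F)
    (hβt : ∀ j, Tangible F (β j))
    (hβν : ∀ j, nuEq F (β j) (B (b j) (b j)))
    (hβinv : ∀ j, β j * βinv j = 1)
    (v : V) :
    (∀ i, Ghost0 F (B (v + ∑ j, (B v (b j) * βinv j) • b j) (b i))) ∧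
      ∀ u ∈ Submodule.span F (Set.range b),
        Ghost0 F (B (v + ∑ j, (B v (b j) * βinv j) • b j) u) := by
  classical
  open SupertropicalSemifield in
  have key : ∀ i, Ghost0 F (B (v + ∑ j, (B v (b j) * βinv j) • b j) (b i)) := by
    intro i
    obtain ⟨h, hg, he⟩ := bilin_add_sum B hB (b i) v Finset.univ
      (fun j => (B v (b j) * βinv j) • b j)
    rw [he]
    have hterm : ∀ j, j ≠ i → Ghost0 F (B ((B v (b j) * βinv j) • b j) (b i)) := by
      intro j hj
      by_cases ht : Tangible F (B v (b j) * βinv j)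
      · have hmul := (hB.1 (b i)).2 (B v (b j) * βinv j) ht (b j)
        simp only [smul_eq_mul] at hmul
        rw [hmul]
        exact ghost0_mul_right' (horth j i hj) _
      · refine ghost0_of_self_add (fun w => B w (b i)) (hB.1 (b i)).1
          ((B v (b j) * βinv j) • b j) ?_
        rw [← add_smul, (ghost0_iff' _).1 (ghost0_of_not_tangible ht)]
    have hpair : Ghost0 F (B v (b i) + B ((B v (b i) * βinv i) • b i) (b i)) := by
      by_cases ht : Tangible F (B v (b i) * βinv i)
      · have hmul := (hB.1 (b i)).2 (B v (b i) * βinv i) ht (b i)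
        simp only [smul_eq_mul] at hmul
        rw [hmul]
        have hν : nu (B v (b i) * βinv i * B (b i) (b i)) = nu (B v (b i)) := by
          rw [nu_mul, nu_mul, ← hβν i, mul_assoc, ← nu_mul,
            mul_comm (βinv i), hβinv i, ← nu_mul, mul_one]
        rw [add_eq_nu _ _ hν.symm]
        exact ghost0_nu' _
      · have hcg : Ghost0 F (B v (b i) * βinv i) := ghost0_of_not_tangible ht
        have h1 : Ghost0 F (B v (b i)) := by
          have hbe : B v (b i) = (B v (b i) * βinv i) * β i := by
            rw [mul_assoc, mul_comm (βinv i), hβinv i, mul_one]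
          rw [hbe]
          exact ghost0_mul_left' hcg _
        have h2 : Ghost0 F (B ((B v (b i) * βinv i) • b i) (b i)) := by
          refine ghost0_of_self_add (fun w => B w (b i)) (hB.1 (b i)).1
            ((B v (b i) * βinv i) • b i) ?_
          rw [← add_smul, (ghost0_iff' _).1 hcg]
        exact ghost0_add' h1 h2
    rw [← Finset.add_sum_erase _ _ (Finset.mem_univ i)]
    have hre : B v (b i) +
          (B ((B v (b i) * βinv i) • b i) (b i) +
            ∑ j ∈ Finset.univ.erase i, B ((B v (b j) * βinv j) • b j) (b i)) + h
        = (B v (b i) + B ((B v (b i) * βinv i) • b i) (b i)) +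
          (∑ j ∈ Finset.univ.erase i, B ((B v (b j) * βinv j) • b j) (b i)) + h := by
      ring
    rw [hre]
    refine ghost0_add' (ghost0_add' hpair ?_) hg
    exact Finset.sum_induction _ _ (fun a b => ghost0_add') ghost0_zero'
      (fun j hj => hterm j (Finset.ne_of_mem_erase hj))
  refine ⟨key, ?_⟩
  intro u hu
  induction hu using Submodule.span_induction with
  | mem x hx =>
    obtain ⟨i, rfl⟩ := hx
    exact key i
  | zero =>
    exact ghost0_of_self_add (fun w => B (v + ∑ j, (B v (b j) * βinv j) • b j) w)
      (hB.2 _).1 0 (by simp)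
  | add x y hx hy px py =>
    obtain ⟨h, hg, he⟩ := (hB.2 (v + ∑ j, (B v (b j) * βinv j) • b j)).1 x y
    simp only at he
    rw [he]
    exact ghost0_add' (ghost0_add' px py) (ghost0_of_ghostV' hg)
  | smul a x hx px =>
    by_cases ht : Tangible F a
    · have hmul := (hB.2 (v + ∑ j, (B v (b j) * βinv j) • b j)).2 a ht x
      simp only [smul_eq_mul] at hmul
      rw [hmul]
      exact ghost0_mul_right' px a
    · refine ghost0_of_self_add (fun w => B (v + ∑ j, (B v (b j) * βinv j) • b j) w)
        (hB.2 _).1 (a • x) ?_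
      rw [← add_smul, (ghost0_iff' _).1 (ghost0_of_not_tangible ht)]
end

section
/- Let B be a supertropically symmetric bilinear form on a supertropical vector space V over a supertropical semifield F such that every pair of vectors of V is weakly Cauchy-Schwartz, and define Q_B(v) := ⟨v,v⟩. Then Q_B(αv) = α²Q_B(v) for all tangible α and Q_B(v+w) ⊨_gs Q_B(v) + Q_B(w) for all v,w ∈ V (so Q_B is a quasilinear quadratic form); moreover, if B is strict, then Q_B(v+w) = Q_B(v) + Q_B(w) for all v,w ∈ V (Q_B is strictly quasilinear). -/
namespace STAux

open Supertropical SupertropicalSemifield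

variable {F : Type*} [SupertropicalSemifield F]

lemma add_self' (a : F) : a + a = nu a := add_eq_nu a a rfl

lemma ghost_add' {a b : F} (ha : nu a = a) (hb : nu b = b) : nu (a + b) = a + b := by
  rw [nu_add, ha, hb]

lemma ghost_mul' {a b : F} (ha : nu a = a) (hb : nu b = b) : nu (a * b) = a * b := by
  rw [nu_mul, ha, hb]

lemma ghost_idem' {a : F} (ha : nu a = a) : a + a = a := by rw [add_self' a, ha]

lemma ghost_total {a b : F} (ha : nu a = a) (hb : nu b = b) :
    a + b = a ∨ a + b = b := by
  by_cases h : nu a = nu b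
  · left
    have hab : a = b := by rw [← ha, ← hb, h]
    rw [hab, ghost_idem' hb]
  · exact add_cases a b h

lemma ghost_le_trans {x y z : F} (hxy : x + y = x) (hyz : y + z = y) : x + z = x := by
  calc x + z = x + y + z := by rw [hxy]
    _ = x + (y + z) := add_assoc x y z
    _ = x + y := by rw [hyz]
    _ = x := hxy

lemma ghost_antisym {x y : F} (h1 : x + y = x) (h2 : y + x = y) : x = y :=
  h1.symm.trans ((add_comm x y).trans h2)

lemma ghost_cancel {n x y : F} (hn0 : n ≠ 0) (hn : nu n = n) (h : n * x = n * y)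
    (hx : nu x = x) (hy : nu y = y) : x = y := by
  obtain ⟨t, ht, htn⟩ := nu_onto n hn hn0
  obtain ⟨u, hu, htu⟩ := tangible_inv t ht
  have h1 : n * nu u = nu 1 := by rw [← htn, ← nu_mul, htu]
  have e1 : ∀ z : F, nu z = z → z * nu (1 : F) = z := fun z hz => by
    rw [← add_self' 1, mul_add, mul_one, ghost_idem' hz]
  have h2 : n * x * nu u = n * y * nu u := by rw [h]
  calc x = x * nu 1 := (e1 x hx).symm
    _ = n * x * nu u := by rw [← h1]; ring
    _ = n * y * nu u := h2
    _ = y * nu 1 := by rw [← h1]; ring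
    _ = y := e1 y hy

lemma ghost_sqrt_le {m n : F} (hm : nu m = m) (hn : nu n = n)
    (h : m * m + n * n = m * m) : m + n = m := by
  rcases ghost_total hm hn with h1 | h1
  · exact h1
  · have h2 : n * n + n * m = n * n := by
      calc n * n + n * m = n * (m + n) := by ring
        _ = n * n := by rw [h1]
    have h3 : n * m + m * m = n * m := by
      calc n * m + m * m = m * (m + n) := by ring
        _ = m * n := by rw [h1]
        _ = n * m := mul_comm m n
    have h4 : n * m + n * n = n * m := ghost_le_trans h3 h
    have h5 : n * m = n * n := ghost_antisym h4 h2
    by_cases hn0 : n = 0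
    · subst hn0
      have hm0 : m = 0 := by simpa using h1
      simp [hm0]
    · have hmn : m = n := ghost_cancel hn0 hn h5 hm hn
      rw [hmn, ghost_idem' hn]

lemma key_ghost {a b c d : F} (ha : nu a = a) (hb : nu b = b) (hc : nu c = c) (hd : nu d = d)
    (hcs : a * b + (c * c + d * d) = a * b) :
    ((a + b) + (c + d) = a + b) ∧ ((a + b = c + d) → a = b) := by
  have hab : nu (a * b) = a * b := ghost_mul' ha hb
  have hcd : nu (c * d) = c * d := ghost_mul' hc hd
  have h1 : (c * c + d * d) + c * d = c * c + d * d := by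
    rcases ghost_total hc hd with h | h
    · have hx : c * c + c * d = c * c := by
        calc c * c + c * d = c * (c + d) := by ring
          _ = c * c := by rw [h]
      calc (c * c + d * d) + c * d = (c * c + c * d) + d * d := by ring
        _ = c * c + d * d := by rw [hx]
    · have hx : d * d + c * d = d * d := by
        calc d * d + c * d = d * (c + d) := by ring
          _ = d * d := by rw [h]
      calc (c * c + d * d) + c * d = c * c + (d * d + c * d) := by ring
        _ = c * c + d * d := by rw [hx]
  have hn2 : (c + d) * (c + d) = c * c + d * d := by
    calc (c + d) * (c + d) = (c * c + d * d) + (c * d + c * d) := by ring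
      _ = (c * c + d * d) + c * d := by rw [ghost_idem' hcd]
      _ = c * c + d * d := h1
  have hm2 : (a + b) * (a + b) + a * b = (a + b) * (a + b) := by
    calc (a + b) * (a + b) + a * b = a * a + b * b + (a * b + (a * b + a * b)) := by ring
      _ = a * a + b * b + (a * b + a * b) := by conv_lhs => rw [ghost_idem' hab]
      _ = (a + b) * (a + b) := by ring
  have hmn2 : (a + b) * (a + b) + (c + d) * (c + d) = (a + b) * (a + b) := by
    rw [hn2]
    exact ghost_le_trans hm2 hcs
  have hmg : nu (a + b) = a + b := ghost_add' ha hb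
  have hng : nu (c + d) = c + d := ghost_add' hc hd
  refine ⟨ghost_sqrt_le hmg hng hmn2, fun heq => ?_⟩
  have hab_ge : a * b + (a + b) * (a + b) = a * b := by
    rw [heq, hn2]; exact hcs
  have hab_eq : a * b = (a + b) * (a + b) := ghost_antisym hab_ge hm2
  have haa2 : (a + b) * (a + b) + a * a = (a + b) * (a + b) := by
    have hga : nu (a * a) = a * a := ghost_mul' ha ha
    calc (a + b) * (a + b) + a * a = (a * a + a * a) + ((a * b + a * b) + b * b) := by ring
      _ = a * a + ((a * b + a * b) + b * b) := by rw [ghost_idem' hga]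
      _ = (a + b) * (a + b) := by ring
  have hbb2 : (a + b) * (a + b) + b * b = (a + b) * (a + b) := by
    have hgb : nu (b * b) = b * b := ghost_mul' hb hb
    calc (a + b) * (a + b) + b * b = (b * b + b * b) + ((a * b + a * b) + a * a) := by ring
      _ = b * b + ((a * b + a * b) + a * a) := by rw [ghost_idem' hgb]
      _ = (a + b) * (a + b) := by ring
  have haa : a * b + a * a = a * b := by rw [hab_eq]; exact haa2
  have hbb : a * b + b * b = a * b := by rw [hab_eq]; exact hbb2
  have hba : b + a = b := by
    by_cases ha0 : a = 0
    · simp [ha0]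
    · refine ghost_cancel ha0 ha ?_ (ghost_add' hb ha) hb
      calc a * (b + a) = a * b + a * a := by ring
        _ = a * b := haa
  have hab' : a + b = a := by
    by_cases hb0 : b = 0
    · simp [hb0]
    · refine ghost_cancel hb0 hb ?_ (ghost_add' ha hb) ha
      calc b * (a + b) = a * b + b * b := by ring
        _ = a * b := hbb
        _ = b * a := mul_comm a b
  exact ghost_antisym hab' hba

lemma key {p q r s : F}
    (hcs : nu (p * q) + nu (r * r + s * s) = nu (p * q)) :
    p + q + (r + s) = p + q := by
  have hcs' : nu p * nu q + (nu r * nu r + nu s * nu s) = nu p * nu q := by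
    rw [← nu_mul, ← nu_mul, ← nu_mul, ← nu_add]; exact hcs
  obtain ⟨hmain, heqcase⟩ :=
    key_ghost (nu_idem p) (nu_idem q) (nu_idem r) (nu_idem s) hcs'
  by_cases h : nu (p + q) = nu (r + s)
  · have hab : nu p = nu q := by
      apply heqcase
      rw [← nu_add, ← nu_add]; exact h
    have hpq : p + q = nu p := add_eq_nu p q hab
    have hgpq : nu (p + q) = p + q := by rw [hpq, nu_idem]
    rw [add_eq_nu _ _ h]; exact hgpq
  · rcases add_cases (p + q) (r + s) h with h' | h'
    · exact h'
    · exfalso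
      apply h
      have hh : nu (p + q + (r + s)) = nu (p + q) := by
        rw [nu_add, nu_add, nu_add]; exact hmain
      rw [h'] at hh
      exact hh.symm

end STAux

open Supertropical in
/-- STATEMENT 18: If every pair of vectors is weakly Cauchy-Schwartz with
respect to a supertropically symmetric bilinear form `B`, then
`Q_B(v) := ⟨v,v⟩` is a quasilinear quadratic form: `Q_B(αv) = α²Q_B(v)` for
tangible `α` and `Q_B(v+w) ⊨_gs Q_B(v) + Q_B(w)`; if moreover `B` is strict,
then `Q_B(v+w) = Q_B(v) + Q_B(w)` (`Q_B` is strictly quasilinear). -/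
theorem stmt18 {F : Type*} [SupertropicalSemifield F]
    {V : Type*} [AddCommMonoid V] [Module F V]
    (B : V → V → F) (hB : IsBilinear F B) (hsym : SupSymmetric F B)
    (hcs : ∀ v w : V, WeakCS F B v w) :
    (∀ a : F, Tangible F a → ∀ v : V, B (a • v) (a • v) = a ^ 2 * B v v) ∧
    (∀ v w : V, GS F (B (v + w) (v + w)) (B v v + B w w)) ∧
    (IsStrict F B → ∀ v w : V, B (v + w) (v + w) = B v v + B w w) := by
  obtain ⟨hB1, hB2⟩ := hB
  refine ⟨?_, ?_, ?_⟩
  · intro a ha v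
    have h1 : B (a • v) (a • v) = a • B (a • v) v := (hB2 (a • v)).2 a ha v
    have h2 : B (a • v) v = a • B v v := (hB1 v).2 a ha v
    rw [h1, h2, smul_eq_mul, smul_eq_mul]
    ring
  · intro v w
    obtain ⟨h1, hg1, e1⟩ := (hB1 (v + w)).1 v w
    obtain ⟨h2, hg2, e2⟩ := (hB2 v).1 v w
    obtain ⟨h3, hg3, e3⟩ := (hB2 w).1 v w
    have hG : ∀ x : F, GhostV F x → SupertropicalSemifield.nu x = x := by
      rintro x ⟨u, rfl⟩
      rw [smul_eq_mul, add_mul, one_mul, STAux.add_self', SupertropicalSemifield.nu_idem]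
    refine ⟨B v w + B w v + (h1 + (h2 + h3)), ?_, ?_⟩
    · exact STAux.ghost_add' (hsym v w)
        (STAux.ghost_add' (hG _ hg1) (STAux.ghost_add' (hG _ hg2) (hG _ hg3)))
    · have e1' : B (v + w) (v + w) = B v (v + w) + B w (v + w) + h1 := e1
      have e2' : B v (v + w) = B v v + B v w + h2 := e2
      have e3' : B w (v + w) = B w v + B w w + h3 := e3
      rw [e1', e2', e3']; ring
  · intro hst v w
    have e := hst 1 1 1 1 v w v w
    simp only [one_smul, one_mul] at e
    have hcs0 : SupertropicalSemifield.nu (B v v * B w w) +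
        SupertropicalSemifield.nu (B v w ^ 2 + B w v ^ 2) =
        SupertropicalSemifield.nu (B v v * B w w) := hcs v w
    rw [pow_two, pow_two] at hcs0
    calc B (v + w) (v + w) = B v v + B w w + (B v w + B w v) := by rw [e]; ring
      _ = B v v + B w w := STAux.key hcs0
end
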